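/- A Hausdorff paracompact quasi-local metric space (Z, 𝔔) is induced by a metric: there exists a metric D on Z such that the family {(Z, D)} represents the quasi-local metric 𝔔, i.e., {(Z, D)} together with any representative {(Z_i, d_i)}_{i∈I} ∈ 𝔔 forms a cover of Z by quasi-locally equal metric spaces. -/

import Mathlib

open Set Filter Topology

/-!
Take a partition of unity `φᵢ` subordinate to the charts `Zᵢ` and put
`D x y = ∑ᵢ |φᵢ x - φᵢ y| + min (φᵢ x) (φᵢ y) * d̄ᵢ x y`, where `d̄ᵢ = min dᵢ 1` on `Zᵢ` and
`d̄ᵢ = 1` off `Zᵢ`. Each summand is the distance between `(x, φᵢ x)` and `(y, φᵢ y)` in a cone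
over `(Z, d̄ᵢ)`, so `D` is a metric. If `D z y` is small then, for a chart `j` with `φⱼ z > 0`,
`φⱼ y` stays near `φⱼ z` and so `dⱼ z y` is small; by quasi-local equality every `dᵢ z y` is
small as well. Conversely local finiteness of the `φᵢ` makes `D z ·` continuous at `z`. Hence
`D`-balls and chart balls generate the same topology, and `D` is quasi-locally equal to each `dᵢ`.
-/

/-- The distance between the points at heights `a` and `b` above two points at distance `e` in
the cone over a space of diameter at most `1`. -/
def coneDist (a b e : ℝ) : ℝ := |a - b| + min a b * e

section coneDist

variable {a b c e E F G m : ℝ}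

lemma coneDist_comm (a b e : ℝ) : coneDist a b e = coneDist b a e := by
  rw [coneDist, coneDist, abs_sub_comm, min_comm]

lemma coneDist_nonneg (ha : 0 ≤ a) (hb : 0 ≤ b) (he : 0 ≤ e) : 0 ≤ coneDist a b e :=
  add_nonneg (abs_nonneg _) (mul_nonneg (le_min ha hb) he)

lemma coneDist_zero_left (hb : 0 ≤ b) (e : ℝ) : coneDist 0 b e = b := by
  simp [coneDist, min_eq_left hb, abs_of_nonneg hb]

lemma coneDist_self_zero (a : ℝ) : coneDist a a 0 = 0 := by
  simp [coneDist]

lemma coneDist_triangle (ha : 0 ≤ a) (hb : 0 ≤ b) (hc : 0 ≤ c) (hE : E ≤ 1) (hF : 0 ≤ F)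
    (hG : 0 ≤ G) (h : E ≤ F + G) : coneDist a c E ≤ coneDist a b F + coneDist b c G := by
  unfold coneDist
  by_cases hb' : min a c ≤ b
  · have k1 := mul_le_mul_of_nonneg_left h (le_min ha hc)
    have k2 := mul_le_mul_of_nonneg_right (le_min (min_le_left a c) hb') hF
    have k3 := mul_le_mul_of_nonneg_right (le_min hb' (min_le_right a c)) hG
    have k4 := abs_sub_le a b c
    nlinarith
  · -- the detours `a - b` and `c - b` down to `b` pay for the shortfall `(min a c - b) * E`
    replace hb' := not_le.1 hb'
    have hba : b < a := hb'.trans_le (min_le_left a c)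
    have hbc : b < c := hb'.trans_le (min_le_right a c)
    rw [min_eq_right hba.le, min_eq_left hbc.le, abs_of_pos (sub_pos.2 hba),
      abs_of_neg (sub_neg.2 hbc)]
    have habc : |a - c| = a + c - 2 * min a c := by
      rcases le_total a c with h | h
      · rw [min_eq_left h, abs_of_nonpos (by linarith)]; ring
      · rw [min_eq_right h, abs_of_nonneg (by linarith)]; ring
    have k1 := mul_le_mul_of_nonneg_left h hb
    have k2 : (min a c - b) * E ≤ (min a c - b) * 2 :=
      mul_le_mul_of_nonneg_left (hE.trans one_le_two) (by linarith)
    nlinarith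

lemma lt_of_coneDist_lt (ha : 0 < a) (hb : 0 ≤ b) (he : 0 ≤ e) (hm : m ≤ 1)
    (h : coneDist a b e < a * m / 2) : e < m := by
  unfold coneDist at h
  have hprod : 0 ≤ min a b * e := mul_nonneg (le_min ha.le hb) he
  have hab : |a - b| < a / 2 := by nlinarith
  have hb' : a / 2 < b := by linarith [le_abs_self (a - b)]
  have hmin : a / 2 ≤ min a b := le_min (by linarith) hb'.le
  nlinarith [abs_nonneg (a - b), mul_le_mul_of_nonneg_right hmin he]

lemma eq_zero_of_coneDist_eq_zero (ha : 0 < a) (hb : 0 ≤ b) (he : 0 ≤ e)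
    (h : coneDist a b e = 0) : e = 0 := by
  unfold coneDist at h
  have hprod : 0 ≤ min a b * e := mul_nonneg (le_min ha.le hb) he
  have hba : b = a := by linarith [abs_eq_zero.1 (le_antisymm (by linarith) (abs_nonneg (a - b)))]
  rw [hba, min_self, sub_self, abs_zero, zero_add] at h
  exact (mul_eq_zero.1 h).resolve_left ha.ne'

end coneDist

structure IsMetricOn {Z : Type*} (U : Set Z) (d : Z → Z → ℝ) : Prop where
  nonneg : ∀ x ∈ U, ∀ y ∈ U, 0 ≤ d x y
  symm : ∀ x ∈ U, ∀ y ∈ U, d x y = d y x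
  eq_zero_iff : ∀ x ∈ U, ∀ y ∈ U, d x y = 0 ↔ x = y
  triangle : ∀ x ∈ U, ∀ y ∈ U, ∀ z ∈ U, d x z ≤ d x y + d y z

open scoped Classical in
/-- The value `1` off `U` keeps the triangle inequality valid on all of `Z`. -/
noncomputable def truncExtend {Z : Type*} (U : Set Z) (d : Z → Z → ℝ) (x y : Z) : ℝ :=
  if x ∈ U ∧ y ∈ U then min (d x y) 1 else 1

section truncExtend

variable {Z : Type*} {U : Set Z} {d : Z → Z → ℝ} {x y : Z}

lemma truncExtend_le_one (x y : Z) : truncExtend U d x y ≤ 1 := by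
  unfold truncExtend
  split_ifs
  exacts [min_le_right _ _, le_rfl]

lemma truncExtend_eq_one (h : ¬(x ∈ U ∧ y ∈ U)) : truncExtend U d x y = 1 := by
  simp only [truncExtend, if_neg h]

lemma mem_and_lt_of_truncExtend_lt {m : ℝ} (hm : m ≤ 1) (h : truncExtend U d x y < m) :
    x ∈ U ∧ y ∈ U ∧ d x y < m := by
  unfold truncExtend at h
  split_ifs at h with hxy
  · exact ⟨hxy.1, hxy.2, (min_lt_iff.1 h).resolve_right hm.not_gt⟩
  · linarith

end truncExtend

namespace IsMetricOn

variable {Z : Type*} {U : Set Z} {d : Z → Z → ℝ} {x y z : Z}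

lemma self_eq_zero (hd : IsMetricOn U d) (hx : x ∈ U) : d x x = 0 :=
  (hd.eq_zero_iff x hx x hx).2 rfl

lemma truncExtend_nonneg (hd : IsMetricOn U d) (x y : Z) : 0 ≤ truncExtend U d x y := by
  unfold truncExtend
  split_ifs with h
  exacts [le_min (hd.nonneg x h.1 y h.2) zero_le_one, zero_le_one]

lemma truncExtend_self (hd : IsMetricOn U d) (hx : x ∈ U) : truncExtend U d x x = 0 := by
  simp [truncExtend, hx, hd.self_eq_zero hx]

lemma truncExtend_comm (hd : IsMetricOn U d) (x y : Z) :
    truncExtend U d x y = truncExtend U d y x := by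
  unfold truncExtend
  by_cases h : x ∈ U ∧ y ∈ U
  · rw [if_pos h, if_pos h.symm, hd.symm x h.1 y h.2]
  · rw [if_neg h, if_neg (mt And.symm h)]

lemma truncExtend_triangle (hd : IsMetricOn U d) (x y z : Z) :
    truncExtend U d x z ≤ truncExtend U d x y + truncExtend U d y z := by
  have h₁ := hd.truncExtend_nonneg x y
  have h₂ := hd.truncExtend_nonneg y z
  by_cases hxy : x ∈ U ∧ y ∈ U
  · by_cases hyz : y ∈ U ∧ z ∈ U
    · simp only [truncExtend, if_pos hxy, if_pos hyz, if_pos (And.intro hxy.1 hyz.2)]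
      have := hd.triangle x hxy.1 y hxy.2 z hyz.2
      have := hd.nonneg x hxy.1 y hxy.2
      have := hd.nonneg y hyz.1 z hyz.2
      rcases min_cases (d x y) 1 with h | h <;> rcases min_cases (d y z) 1 with h' | h' <;>
        linarith [min_le_left (d x z) 1, min_le_right (d x z) 1]
    · rw [truncExtend_eq_one hyz]
      linarith [truncExtend_le_one (U := U) (d := d) x z]
  · rw [truncExtend_eq_one hxy]
    linarith [truncExtend_le_one (U := U) (d := d) x z]

lemma eq_of_truncExtend_eq_zero (hd : IsMetricOn U d) (h : truncExtend U d x y = 0) :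
    x = y := by
  unfold truncExtend at h
  split_ifs at h with hxy
  · rcases min_choice (d x y) 1 with h₁ | h₁ <;> rw [h₁] at h
    · exact (hd.eq_zero_iff x hxy.1 y hxy.2).1 h
    · exact absurd h one_ne_zero
  · exact absurd h one_ne_zero

lemma isOpen [TopologicalSpace Z] (hd : IsMetricOn U d)
    (hball : ∀ x ∈ U, ∀ r, IsOpen {y ∈ U | d x y < r}) : IsOpen U := by
  refine isOpen_iff_forall_mem_open.2 fun x hx => ⟨_, fun y hy => hy.1, hball x hx 1, hx, ?_⟩
  simp [hd.self_eq_zero hx]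

lemma tendsto_truncExtend [TopologicalSpace Z] (hd : IsMetricOn U d) (hx : x ∈ U)
    (hball : ∀ r, IsOpen {y ∈ U | d x y < r}) : Tendsto (truncExtend U d x) (𝓝 x) (𝓝 0) := by
  refine tendsto_order.2 ⟨fun a ha => .of_forall fun y => ha.trans_le (hd.truncExtend_nonneg x y),
    fun r hr => ?_⟩
  have hmem : x ∈ {y ∈ U | d x y < r} := ⟨hx, by rwa [hd.self_eq_zero hx]⟩
  filter_upwards [(hball r).mem_nhds hmem] with y hy
  simp only [truncExtend, hx, hy.1, and_self, if_true]
  exact (min_le_left _ _).trans_lt hy.2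

end IsMetricOn

namespace PartitionOfUnity

variable {ι X : Type*} [TopologicalSpace X] {s : Set X} (f : PartitionOfUnity ι X s)
  {e : ι → X → X → ℝ}

noncomputable def coneSum (e : ι → X → X → ℝ) (x y : X) : ℝ :=
  ∑ᶠ i, coneDist (f i x) (f i y) (e i x y)

lemma support_coneDist_subset (e : ι → X → X → ℝ) (x y : X) :
    (Function.support fun i => coneDist (f i x) (f i y) (e i x y)) ⊆
      ↑(f.finsupport x) ∪ ↑(f.finsupport y) := by
  intro i hi
  simp only [coe_finsupport, mem_union, Function.mem_support]
  by_contra! h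
  exact hi (by simp only [h.1, h.2, coneDist_zero_left le_rfl])

lemma hasFiniteSupport_coneDist (e : ι → X → X → ℝ) (x y : X) :
    Function.HasFiniteSupport fun i => coneDist (f i x) (f i y) (e i x y) :=
  ((f.finsupport x).finite_toSet.union (f.finsupport y).finite_toSet).subset
    (f.support_coneDist_subset e x y)

variable (he : ∀ i x y, 0 ≤ e i x y)
include he

lemma coneDist_le_coneSum (i : ι) (x y : X) :
    coneDist (f i x) (f i y) (e i x y) ≤ f.coneSum e x y :=
  single_le_finsum i (f.hasFiniteSupport_coneDist e x y)
    fun j => coneDist_nonneg (f.nonneg j x) (f.nonneg j y) (he j x y)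

lemma coneSum_nonneg (x y : X) : 0 ≤ f.coneSum e x y :=
  finsum_nonneg fun i => coneDist_nonneg (f.nonneg i x) (f.nonneg i y) (he i x y)

lemma coneSum_triangle (he₁ : ∀ i x y, e i x y ≤ 1)
    (htri : ∀ i x y z, e i x z ≤ e i x y + e i y z) (x y z : X) :
    f.coneSum e x z ≤ f.coneSum e x y + f.coneSum e y z := by
  rw [coneSum, coneSum, coneSum, ← finsum_add_distrib (f.hasFiniteSupport_coneDist e x y)
    (f.hasFiniteSupport_coneDist e y z)]
  refine finsum_le_finsum' (f.hasFiniteSupport_coneDist e x z)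
    (((f.hasFiniteSupport_coneDist e x y).union (f.hasFiniteSupport_coneDist e y z)).subset
      (Function.support_add _ _)) fun i => ?_
  exact coneDist_triangle (f.nonneg i x) (f.nonneg i y) (f.nonneg i z) (he₁ i x z) (he i x y)
    (he i y z) (htri i x y z)

lemma lt_of_coneSum_lt {j : ι} {x y : X} {m : ℝ} (hpos : 0 < f j x) (hm : m ≤ 1)
    (h : f.coneSum e x y < f j x * m / 2) : e j x y < m :=
  lt_of_coneDist_lt hpos (f.nonneg j y) (he j x y) hm ((f.coneDist_le_coneSum he j x y).trans_lt h)

lemma eq_of_coneSum_eq_zero (heq : ∀ i x y, e i x y = 0 → x = y) {x y : X} (hx : x ∈ s)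
    (h : f.coneSum e x y = 0) : x = y := by
  obtain ⟨j, hj⟩ := f.exists_pos hx
  refine heq j x y (eq_zero_of_coneDist_eq_zero hj (f.nonneg j y) (he j x y) ?_)
  exact le_antisymm (h ▸ f.coneDist_le_coneSum he j x y)
    (coneDist_nonneg (f.nonneg j x) (f.nonneg j y) (he j x y))

omit he

lemma coneSum_comm (hcomm : ∀ i x y, e i x y = e i y x) (x y : X) :
    f.coneSum e x y = f.coneSum e y x := by
  simp only [coneSum, coneDist_comm (f _ x), hcomm _ x y]

lemma coneSum_self (hself : ∀ i x, f i x ≠ 0 → e i x x = 0) (x : X) : f.coneSum e x x = 0 := by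
  refine finsum_eq_zero_of_forall_eq_zero fun i => ?_
  by_cases h : f i x = 0
  · rw [h, coneDist_zero_left le_rfl]
  · rw [hself i x h, coneDist_self_zero]

lemma tendsto_coneDist (hlim : ∀ i x, f i x ≠ 0 → Tendsto (e i x) (𝓝 x) (𝓝 0)) (i : ι) (x : X) :
    Tendsto (fun y => coneDist (f i x) (f i y) (e i x y)) (𝓝 x) (𝓝 0) := by
  have hf : Tendsto (fun y => f i y) (𝓝 x) (𝓝 (f i x)) := (f i).continuous.tendsto x
  by_cases h : f i x = 0
  · simp only [h, coneDist_zero_left (f.nonneg i _)]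
    simpa [h] using hf
  · have hc : Tendsto (fun _ => f i x) (𝓝 x) (𝓝 (f i x)) := tendsto_const_nhds
    simpa [coneDist] using (hc.sub hf).abs.add ((hc.min hf).mul (hlim i x h))

lemma tendsto_coneSum (hlim : ∀ i x, f i x ≠ 0 → Tendsto (e i x) (𝓝 x) (𝓝 0)) (x : X) :
    Tendsto (f.coneSum e x) (𝓝 x) (𝓝 0) := by
  have hsum : ∀ᶠ y in 𝓝 x, f.coneSum e x y =
      ∑ i ∈ f.fintsupport x, coneDist (f i x) (f i y) (e i x y) := by
    filter_upwards [f.eventually_finsupport_subset x] with y hy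
    refine finsum_eq_sum_of_support_subset _ ((f.support_coneDist_subset e x y).trans ?_)
    exact union_subset (Finset.coe_subset.2 (f.finsupport_subset_fintsupport x))
      (Finset.coe_subset.2 hy)
  simpa using (tendsto_finsetSum _ fun i _ => f.tendsto_coneDist hlim i x).congr'
    (hsum.mono fun y hy => hy.symm)

end PartitionOfUnity

def metricBalls {X : Type*} (D : X → X → ℝ) : Set (Set X) :=
  {B | ∃ x : X, ∃ r : ℝ, B = {y | D x y < r}}

lemma eq_generateFrom_metricBalls {X : Type*} [t : TopologicalSpace X] {g : Set (Set X)}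
    (hg : t = TopologicalSpace.generateFrom g) {D : X → X → ℝ}
    (htri : ∀ x y z, D x z ≤ D x y + D y z) (hself : ∀ x, D x x = 0)
    (hlim : ∀ x, Tendsto (D x) (𝓝 x) (𝓝 0))
    (hgen : ∀ B ∈ g, ∀ y ∈ B, ∃ r > 0, {y' | D y y' < r} ⊆ B) :
    t = TopologicalSpace.generateFrom (metricBalls D) := by
  refine le_antisymm (TopologicalSpace.le_generateFrom_iff_subset_isOpen.2 ?_) ?_
  · rintro _ ⟨x, r, rfl⟩
    refine isOpen_iff_mem_nhds.2 ?_
    intro y (hy : D x y < r)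
    filter_upwards [(hlim y).eventually_lt_const (sub_pos.2 hy)] with y' hy'
    linarith [htri x y y']
  · rw [hg]
    refine TopologicalSpace.le_generateFrom_iff_subset_isOpen.2 fun B hB => ?_
    refine (@isOpen_iff_forall_mem_open X (.generateFrom (metricBalls D)) B).2 ?_
    intro y hy
    obtain ⟨r, hr, hsub⟩ := hgen B hB y hy
    exact ⟨_, hsub, TopologicalSpace.isOpen_generateFrom_of_mem ⟨y, r, rfl⟩,
      show D y y < r by rwa [hself]⟩

section QuasiLocal

variable {Z ι : Type*} {Zi : ι → Set Z} {di : ι → Z → Z → ℝ}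

def chartBalls (Zi : ι → Set Z) (di : ι → Z → Z → ℝ) : Set (Set Z) :=
  {B | ∃ i, ∃ x ∈ Zi i, ∃ r : ℝ, B = {y ∈ Zi i | di i x y < r}}

section

variable (hopen : ∀ i j, ∀ x ∈ Zi i ∩ Zi j, ∃ r > (0:ℝ), {y ∈ Zi i | di i x y < r} ⊆ Zi j)
  (hql : ∀ ε > (0:ℝ), ∃ δ > (0:ℝ), ∀ i j, ∀ z ∈ Zi i ∩ Zi j, ∃ r > (0:ℝ),
      ∀ x ∈ Zi i ∩ Zi j, ∀ y ∈ Zi i ∩ Zi j,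
        di i z x < r → di i z y < r → di i x y < δ → di j x y < ε)
include hopen hql

lemma exists_chart_ball_subset {i j : ι} (hd : IsMetricOn (Zi i) (di i))
    {z : Z} (hz : z ∈ Zi i ∩ Zi j) {ε : ℝ} (hε : 0 < ε) :
    ∃ m > 0, ∀ y ∈ Zi i, di i z y < m → y ∈ Zi j ∧ di j z y < ε := by
  obtain ⟨δ, hδ, hδql⟩ := hql ε hε
  obtain ⟨r₀, hr₀, hr₀ql⟩ := hδql i j z hz
  obtain ⟨r₁, hr₁, hr₁sub⟩ := hopen i j z hz
  refine ⟨min (min r₀ r₁) δ, lt_min (lt_min hr₀ hr₁) hδ, fun y hy hzy => ?_⟩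
  simp only [lt_min_iff] at hzy
  have hyj : y ∈ Zi j := hr₁sub ⟨hy, hzy.1.2⟩
  refine ⟨hyj, hr₀ql z hz y ⟨hy, hyj⟩ ?_ hzy.1.1 hzy.2⟩
  rwa [hd.self_eq_zero hz.1]

lemma PartitionOfUnity.exists_coneSum_lt_subset [TopologicalSpace Z]
    (f : PartitionOfUnity ι Z univ) (hf : f.IsSubordinate Zi)
    (hd : ∀ i, IsMetricOn (Zi i) (di i)) :
    ∀ i, ∀ z ∈ Zi i, ∀ ε > (0:ℝ), ∃ r > 0, ∀ y,
      f.coneSum (fun i => truncExtend (Zi i) (di i)) z y < r → y ∈ Zi i ∧ di i z y < ε := by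
  intro i z hz ε hε
  obtain ⟨j, hj⟩ := f.exists_pos (mem_univ z)
  have hzj : z ∈ Zi j := hf j (subset_tsupport _ hj.ne')
  obtain ⟨m, hm, hmsub⟩ := exists_chart_ball_subset hopen hql (hd j) ⟨hzj, hz⟩ hε
  refine ⟨f j z * min m 1 / 2, by positivity, fun y hy => ?_⟩
  obtain ⟨-, hyj, hzy⟩ := mem_and_lt_of_truncExtend_lt (min_le_right m 1)
    (f.lt_of_coneSum_lt (fun i => (hd i).truncExtend_nonneg) hj (min_le_right m 1) hy)
  exact hmsub y hyj (hzy.trans_le (min_le_left m 1))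

end

variable {D : Z → Z → ℝ}
  (hnear : ∀ i, ∀ z ∈ Zi i, ∀ ε > (0:ℝ), ∃ r > 0, ∀ y, D z y < r → y ∈ Zi i ∧ di i z y < ε)
include hnear

lemma exists_ball_subset_of_mem_chartBalls (hd : ∀ i, IsMetricOn (Zi i) (di i)) :
    ∀ B ∈ chartBalls Zi di, ∀ y ∈ B, ∃ r > 0, {y' | D y y' < r} ⊆ B := by
  rintro _ ⟨i, x, hx, r, rfl⟩ y ⟨hy, hxy⟩
  obtain ⟨r', hr', hsub⟩ := hnear i y hy (r - di i x y) (sub_pos.2 hxy)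
  refine ⟨r', hr', fun y' hy' => ?_⟩
  obtain ⟨hy'i, hyy'⟩ := hsub y' hy'
  exact ⟨hy'i, by linarith [(hd i).triangle x hx y hy y' hy'i]⟩

lemma quasiLocallyEqual_of_forall_exists_ball (hd : ∀ i, IsMetricOn (Zi i) (di i))
    (hcomm : ∀ x y, D x y = D y x) (htri : ∀ x y z, D x z ≤ D x y + D y z) :
    ∀ ε > (0:ℝ), ∃ δ > (0:ℝ), ∀ i, ∀ z ∈ Zi i, ∃ r > (0:ℝ),
      ∀ x : Z, ∀ y : Z, D z x < r → D z y < r →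
        x ∈ Zi i ∧ y ∈ Zi i ∧ (D x y < δ → di i x y < ε) ∧ (di i x y < δ → D x y < ε) := by
  intro ε hε
  refine ⟨1, one_pos, fun i z hz => ?_⟩
  obtain ⟨r, hr, hsub⟩ := hnear i z hz (ε / 2) (half_pos hε)
  refine ⟨min r (ε / 2), lt_min hr (half_pos hε), fun x y hx hy => ?_⟩
  rw [lt_min_iff] at hx hy
  obtain ⟨hxi, hzx⟩ := hsub x hx.1
  obtain ⟨hyi, hzy⟩ := hsub y hy.1
  refine ⟨hxi, hyi, fun _ => ?_, fun _ => ?_⟩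
  · linarith [(hd i).triangle x hxi z hz y hyi, (hd i).symm x hxi z hz]
  · linarith [htri x z y, hcomm x z]

end QuasiLocal

/-- A Hausdorff paracompact quasi-local metric space `(Z, 𝔔)` — given by a
cover `{(Z_i, d_i)}` of `Z` by quasi-locally equal metric spaces, with the
topology generated by all the metric balls — is induced by a metric: there is a
metric `D` on `Z` inducing the same topology such that `{(Z, D)}` together with
the given family is again a cover of `Z` by quasi-locally equal metric
spaces. -/
theorem hausdorff_paracompact_quasiLocal_metric_space_is_metrizable
    {Z : Type*} {ι : Type*} (Zi : ι → Set Z) (di : ι → Z → Z → ℝ)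
    (hcover : (⋃ i, Zi i) = Set.univ)
    -- each `d_i` is a metric on `Z_i`
    (hnonneg : ∀ i, ∀ x ∈ Zi i, ∀ y ∈ Zi i, 0 ≤ di i x y)
    (hsymm : ∀ i, ∀ x ∈ Zi i, ∀ y ∈ Zi i, di i x y = di i y x)
    (hzero : ∀ i, ∀ x ∈ Zi i, ∀ y ∈ Zi i, (di i x y = 0 ↔ x = y))
    (htri : ∀ i, ∀ x ∈ Zi i, ∀ y ∈ Zi i, ∀ z ∈ Zi i,
      di i x z ≤ di i x y + di i y z)
    -- overlaps are open in each of the metric spaces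
    (hopen : ∀ i j, ∀ x ∈ Zi i ∩ Zi j, ∃ r > (0:ℝ),
      {y ∈ Zi i | di i x y < r} ⊆ Zi j)
    -- the metrics are quasi-locally equal on the overlaps
    (hql : ∀ ε > (0:ℝ), ∃ δ > (0:ℝ), ∀ i j, ∀ z ∈ Zi i ∩ Zi j, ∃ r > (0:ℝ),
      ∀ x ∈ Zi i ∩ Zi j, ∀ y ∈ Zi i ∩ Zi j,
        di i z x < r → di i z y < r → di i x y < δ → di j x y < ε) :
    ∀ t : TopologicalSpace Z,
      t = TopologicalSpace.generateFrom
        {B | ∃ i, ∃ x ∈ Zi i, ∃ r : ℝ, B = {y ∈ Zi i | di i x y < r}} →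
      @T2Space Z t → @ParacompactSpace Z t →
      ∃ D : Z → Z → ℝ,
        (∀ x y : Z, 0 ≤ D x y) ∧
        (∀ x y : Z, D x y = D y x) ∧
        (∀ x y : Z, (D x y = 0 ↔ x = y)) ∧
        (∀ x y z : Z, D x z ≤ D x y + D y z) ∧
        -- `D` induces the topology of `(Z, 𝔔)`
        (t = TopologicalSpace.generateFrom
          {B | ∃ x : Z, ∃ r : ℝ, B = {y | D x y < r}}) ∧
        -- `{(Z, D)}` together with the family is a cover of `Z` by
        -- quasi-locally equal metric spaces
        (∀ ε > (0:ℝ), ∃ δ > (0:ℝ), ∀ i, ∀ z ∈ Zi i, ∃ r > (0:ℝ),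
          ∀ x : Z, ∀ y : Z, D z x < r → D z y < r →
            x ∈ Zi i ∧ y ∈ Zi i ∧
            (D x y < δ → di i x y < ε) ∧ (di i x y < δ → D x y < ε)) := by
  intro t ht _ _
  have hd : ∀ i, IsMetricOn (Zi i) (di i) := fun i => ⟨hnonneg i, hsymm i, hzero i, htri i⟩
  have hball : ∀ i, ∀ x ∈ Zi i, ∀ r, IsOpen {y ∈ Zi i | di i x y < r} := by
    subst ht
    exact fun i x hx r => TopologicalSpace.isOpen_generateFrom_of_mem ⟨i, x, hx, r, rfl⟩
  obtain ⟨f, hf⟩ := PartitionOfUnity.exists_isSubordinate isClosed_univ Zi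
    (fun i => (hd i).isOpen (hball i)) hcover.ge
  have hmem : ∀ i x, f i x ≠ 0 → x ∈ Zi i := fun i x h => hf i (subset_tsupport _ h)
  let e := fun i => truncExtend (Zi i) (di i)
  have he : ∀ i x y, 0 ≤ e i x y := fun i => (hd i).truncExtend_nonneg
  have hDtri := f.coneSum_triangle he (fun i => truncExtend_le_one)
    fun i => (hd i).truncExtend_triangle
  have hDcomm := f.coneSum_comm fun i => (hd i).truncExtend_comm
  have hDself := f.coneSum_self fun i x hx => (hd i).truncExtend_self (hmem i x hx)
  have hnear := f.exists_coneSum_lt_subset hopen hql hf hd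
  refine ⟨f.coneSum e, f.coneSum_nonneg he, hDcomm,
    fun x y => ⟨f.eq_of_coneSum_eq_zero he (fun i _ _ => (hd i).eq_of_truncExtend_eq_zero)
      (mem_univ x), fun h => h ▸ hDself x⟩, hDtri, ?_,
    quasiLocallyEqual_of_forall_exists_ball hnear hd hDcomm hDtri⟩
  exact eq_generateFrom_metricBalls ht hDtri hDself
    (f.tendsto_coneSum fun i x hx =>
      (hd i).tendsto_truncExtend (hmem i x hx) (hball i x (hmem i x hx)))
    (exists_ball_subset_of_mem_chartBalls hnear hd)
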